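/- Let E be a real inner product space, α > 0, and let Ω ⊆ E be a nonempty compact α-strongly convex set. Let f : E → ℝ be differentiable with gradient ∇f. Let w ∈ Ω with ∇f(w) ≠ 0, let v ∈ Ω satisfy ⟨∇f(w), v⟩ ≤ ⟨∇f(w), u⟩ for all u ∈ Ω, and let k = sup_{u ∈ Ω} ⟨u − w, −∇f(w)⟩ be the Frank–Wolfe gap at w. Then there exists c ∈ Ω such that ⟨c − w, ∇f(w)⟩ ≤ −k/2 − (α/8)·‖v − w‖²·‖∇f(w)‖. -/

import Mathlib

open RealInnerProductSpace

/-!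
The oracle point `v` maximizes `u ↦ ⟪u - w, -∇f(w)⟫` over `Ω`, so the Frank–Wolfe gap is attained
at `v`. Strong convexity lets one move from the midpoint of `w` and `v` by `(α/8)‖w - v‖²` in any
unit direction without leaving `Ω`; moving along `-∇f(w)/‖∇f(w)‖` halves the gap and gains the
extra `(α/8)‖v - w‖²‖∇f(w)‖`.
-/

/-- A set `Ω` in a real inner product space is `α`-strongly convex if for all `u, v ∈ Ω`
and all `θ ∈ [0,1]`, every point at distance at most `θ(1−θ)(α/2)‖u−v‖²` from
`θ•u + (1−θ)•v` belongs to `Ω`. -/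
def StronglyConvexSet {E : Type*} [NormedAddCommGroup E] [InnerProductSpace ℝ E]
    (α : ℝ) (Ω : Set E) : Prop :=
  ∀ u ∈ Ω, ∀ v ∈ Ω, ∀ θ : ℝ, θ ∈ Set.Icc (0 : ℝ) 1 → ∀ y : E,
    ‖y - (θ • u + (1 - θ) • v)‖ ≤ θ * (1 - θ) * (α / 2) * ‖u - v‖ ^ 2 → y ∈ Ω

section

variable {E : Type*} [NormedAddCommGroup E] [InnerProductSpace ℝ E]

noncomputable def frankWolfeGap (Ω : Set E) (g w : E) : ℝ :=
  sSup ((fun u => ⟪u - w, -g⟫) '' Ω)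

lemma frankWolfeGap_eq_of_isMinOn {Ω : Set E} {g v : E} (hv : v ∈ Ω)
    (hmin : IsMinOn (fun u => ⟪g, u⟫) Ω v) (w : E) :
    frankWolfeGap Ω g w = ⟪v - w, -g⟫ := by
  refine IsGreatest.csSup_eq ⟨Set.mem_image_of_mem _ hv, ?_⟩
  rintro _ ⟨u, hu, rfl⟩
  simp only [inner_neg_right, real_inner_comm g, inner_sub_right]
  linarith [isMinOn_iff.mp hmin u hu]

lemma StronglyConvexSet.midpoint_add_smul_mem {α : ℝ} {Ω : Set E} (hΩ : StronglyConvexSet α Ω)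
    (hα : 0 ≤ α) {u v : E} (hu : u ∈ Ω) (hv : v ∈ Ω) {x : E} (hx : ‖x‖ ≤ 1) :
    (1 / 2 : ℝ) • u + (1 / 2 : ℝ) • v + (α / 8 * ‖u - v‖ ^ 2) • x ∈ Ω := by
  refine hΩ u hu v hv (1 / 2) ⟨by norm_num, by norm_num⟩ _ ?_
  have hoffset : (1 / 2 : ℝ) • u + (1 / 2 : ℝ) • v + (α / 8 * ‖u - v‖ ^ 2) • x
      - ((1 / 2 : ℝ) • u + (1 - 1 / 2 : ℝ) • v) = (α / 8 * ‖u - v‖ ^ 2) • x := by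
    module
  calc _ = α / 8 * ‖u - v‖ ^ 2 * ‖x‖ := by
        rw [hoffset, norm_smul, Real.norm_of_nonneg (by positivity)]
    _ ≤ α / 8 * ‖u - v‖ ^ 2 := mul_le_of_le_one_right (by positivity) hx
    _ = 1 / 2 * (1 - 1 / 2) * (α / 2) * ‖u - v‖ ^ 2 := by ring

lemma norm_inv_norm_smul_le_one (g : E) : ‖‖g‖⁻¹ • g‖ ≤ 1 := by
  rw [norm_smul, norm_inv, norm_norm]
  exact inv_mul_le_one_of_le₀ le_rfl (norm_nonneg g)

lemma inner_inv_norm_smul_self (g : E) : ⟪‖g‖⁻¹ • g, g⟫ = ‖g‖ := by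
  rw [real_inner_smul_left, real_inner_self_eq_norm_sq]
  rcases eq_or_ne ‖g‖ 0 with h | h
  · simp [h]
  · field_simp

end

theorem strongly_convex_set_improved_direction_general
    {E : Type*} [NormedAddCommGroup E] [InnerProductSpace ℝ E]
    {α : ℝ} (hα : 0 < α) {Ω : Set E}
    (hΩ : StronglyConvexSet α Ω)
    (f' : E → E)
    {w : E} (hw : w ∈ Ω)
    {v : E} (hv : v ∈ Ω) (horacle : ∀ u ∈ Ω, ⟪f' w, v⟫ ≤ ⟪f' w, u⟫)
    {k : ℝ} (hk : k = sSup ((fun u => ⟪u - w, -(f' w)⟫) '' Ω)) :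
    ∃ c ∈ Ω, ⟪c - w, f' w⟫ ≤ -(k / 2) - α / 8 * ‖v - w‖ ^ 2 * ‖f' w‖ := by
  set g := f' w
  have hgap : k = ⟪v - w, -g⟫ := hk.trans (frankWolfeGap_eq_of_isMinOn hv horacle w)
  have hdir : ‖-(‖g‖⁻¹ • g)‖ ≤ 1 := by rw [norm_neg]; exact norm_inv_norm_smul_le_one g
  refine ⟨_, hΩ.midpoint_add_smul_mem hα.le hw hv hdir, le_of_eq ?_⟩
  rw [hgap, ← norm_sub_rev w v]
  have hsplit : (1 / 2 : ℝ) • w + (1 / 2 : ℝ) • v + (α / 8 * ‖w - v‖ ^ 2) • -(‖g‖⁻¹ • g) - w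
      = (1 / 2 : ℝ) • (v - w) - (α / 8 * ‖w - v‖ ^ 2) • (‖g‖⁻¹ • g) := by
    module
  rw [hsplit, inner_sub_left, real_inner_smul_left, real_inner_smul_left,
    inner_inv_norm_smul_self, inner_neg_right]
  ring

/-- Improved descent direction over a strongly convex set: with `v` the Frank–Wolfe oracle
output at `w` and `k` the Frank–Wolfe gap at `w`, there is a point `c ∈ Ω` with
`⟨c − w, ∇f(w)⟩ ≤ −k/2 − (α/8)‖v − w‖²‖∇f(w)‖`. -/
theorem strongly_convex_set_improved_direction
    {E : Type*} [NormedAddCommGroup E] [InnerProductSpace ℝ E]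
    {α : ℝ} (hα : 0 < α) {Ω : Set E} (hne : Ω.Nonempty) (hcomp : IsCompact Ω)
    (hΩ : StronglyConvexSet α Ω)
    (f : E → ℝ) (f' : E → E)
    (hdiff : ∀ x : E, HasFDerivAt f (innerSL ℝ (f' x)) x)
    {w : E} (hw : w ∈ Ω) (hgw : f' w ≠ 0)
    {v : E} (hv : v ∈ Ω) (horacle : ∀ u ∈ Ω, ⟪f' w, v⟫ ≤ ⟪f' w, u⟫)
    {k : ℝ} (hk : k = sSup ((fun u => ⟪u - w, -(f' w)⟫) '' Ω)) :
    ∃ c ∈ Ω, ⟪c - w, f' w⟫ ≤ -(k / 2) - α / 8 * ‖v - w‖ ^ 2 * ‖f' w‖ :=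
  strongly_convex_set_improved_direction_general hα hΩ f' hw hv horacle hk
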